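/- Embed Γ_{n,m} = Γ_n × 𝔖_m into Γ_{n+m}, with Γ_n the wreath product on the first n letters and 𝔖_m permuting the last m letters with trivial root-of-unity components, and embed Γ_{n+m−1} into Γ_{n+m} as the subgroup of elements fixing the letter n+m with trivial root-of-unity component in slot n+m. Then: (1) the ℓ+1 elements γ_{n+m} (γ ∈ μ_ℓ) and s_{n,n+m} form a complete set of representatives of pairwise distinct double cosets in Γ_{n+m−1}\Γ_{n+m}/Γ_{n,m}; (2) for x = γ_{n+m} one has x·Γ_{n,m}·x^{−1} ∩ Γ_{n+m−1} = Γ_{n,m−1} (= Γ_n × 𝔖_{m−1} acting on the letters n+1,…,n+m−1); (3) for x = s_{n,n+m} one has x·Γ_{n,m}·x^{−1} ∩ Γ_{n+m−1} = Γ_{n−1,m} (= Γ_{n−1} × 𝔖_m, with 𝔖_m acting on the letters n,…,n+m−1). -/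

import Mathlib

/-!
`Γ_{n+m}` acts on the pairs `(i, g)` of a letter and a root of unity by
`(f, σ) • (i, g) = (σ i, f (σ i) * g)`, and `Γ_{n+m-1}` is the stabilizer of `(n+m, 1)`. Hence
`w ∈ Γ_{n+m-1} x Γ_{n,m}` iff `w⁻¹ • (n+m, 1)` and `x⁻¹ • (n+m, 1)` lie in the same
`Γ_{n,m}`-orbit. Those orbits are the pairs with `i ≤ n` and, for each `γ`, the pairs `(i, γ)`
with `i > n`; `γ_{n+m}⁻¹` and `s_{n,n+m}⁻¹` send `(n+m, 1)` to `(n+m, γ⁻¹)` and to `(n, 1)`.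

For the intersections, `γ_{n+m}` commutes with all of `Γ_{n+m-1}`. The group `Γ_{n,m}` consists of
the elements whose permutation preserves `T = {n+1, …, n+m}` and whose root components are trivial
on `T`; conjugating by `s_{n,n+m}` replaces `T` by `{n, …, n+m-1}`, and inside `Γ_{n+m-1}` adding
the fixed letter `n+m` to `T` changes nothing.
-/

/- Statement 7: double cosets `Γ_{n+m-1} \ Γ_{n+m} / Γ_{n,m}` and intersections of
conjugates, inside the wreath product `Γ_{n+m} = 𝔖_{n+m} ⋉ μ_ℓ^{n+m}`. -/

noncomputable section

/-- The permutation automorphism of `Fin k → G` given by `σ`, i.e. `f ↦ f ∘ σ⁻¹`. -/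
def permAut (G : Type*) [Group G] (k : ℕ) (σ : Equiv.Perm (Fin k)) : MulAut (Fin k → G) where
  toFun f := f ∘ σ.symm
  invFun f := f ∘ σ
  left_inv f := by funext i; simp
  right_inv f := by funext i; simp
  map_mul' f g := rfl

/-- The action of `𝔖_k` on `G^k` by permutation of the coordinates. -/
def permHom (G : Type*) [Group G] (k : ℕ) : Equiv.Perm (Fin k) →* MulAut (Fin k → G) where
  toFun := permAut G k
  map_one' := MulEquiv.ext fun _ => rfl
  map_mul' _ _ := MulEquiv.ext fun _ => rfl

/-- The wreath product `Γ_k = 𝔖_k ⋉ μ_ℓ^k`. -/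
abbrev WreathGamma (ℓ k : ℕ) : Type :=
  (Fin k → rootsOfUnity ℓ ℂ) ⋊[permHom (rootsOfUnity ℓ ℂ) k] Equiv.Perm (Fin k)

theorem Equiv.Perm.apply_mem_iff_of_mapsTo {α : Type*} [Finite α] (σ : Equiv.Perm α)
    {s : Set α} (h : ∀ i ∈ s, σ i ∈ s) (i : α) : σ i ∈ s ↔ i ∈ s := by
  have himage : σ '' s = s := Set.map_eq_of_subset (f := σ.toEmbedding) (by
    rintro _ ⟨j, hj, rfl⟩; exact h j hj)
  rw [← σ.injective.mem_set_image (s := s) (a := i), himage]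

theorem DoubleCoset.mem_doubleCoset_stabilizer_iff {G α : Type*} [Group G] [MulAction G α]
    {a : α} {K : Subgroup G} {x w : G} :
    w ∈ DoubleCoset.doubleCoset x (MulAction.stabilizer G a : Set G) K ↔
      ∃ k ∈ K, k • x⁻¹ • a = w⁻¹ • a := by
  rw [DoubleCoset.mem_doubleCoset]
  constructor
  · rintro ⟨h, hh, k, hk, rfl⟩
    refine ⟨k⁻¹, K.inv_mem hk, ?_⟩
    rw [SetLike.mem_coe, MulAction.mem_stabilizer_iff] at hh
    nth_rw 2 [← hh]
    simp only [mul_inv_rev, mul_smul, inv_smul_smul]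
  · rintro ⟨k, hk, hka⟩
    refine ⟨w * k * x⁻¹, ?_, k⁻¹, K.inv_mem hk, by group⟩
    rw [SetLike.mem_coe, MulAction.mem_stabilizer_iff, mul_smul, mul_smul, hka, smul_inv_smul]

theorem Subgroup.map_conj_inf_eq_of_commute {G : Type*} [Group G] {H K : Subgroup G} {x : G}
    (hx : ∀ y ∈ H, Commute x y) : K.map (MulAut.conj x).toMonoidHom ⊓ H = K ⊓ H := by
  ext y
  rw [Subgroup.mem_inf, Subgroup.mem_inf, Subgroup.mem_map_equiv, MulAut.conj_symm_apply]
  refine and_congr_left fun hy => ?_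
  rw [mul_assoc, ← (hx y hy).eq, inv_mul_cancel_left]

theorem Equiv.swap_apply_mem_iff {α : Type*} [DecidableEq α] {s : Set α} {i j : α}
    (h : i ∈ s ↔ j ∈ s) (l : α) : Equiv.swap i j l ∈ s ↔ l ∈ s := by
  rcases eq_or_ne l i with rfl | hli
  · rw [Equiv.swap_apply_left, h]
  rcases eq_or_ne l j with rfl | hlj
  · rw [Equiv.swap_apply_right, h]
  rw [Equiv.swap_apply_of_ne_of_ne hli hlj]

theorem Fin.forall_perm_lt_imp_lt_iff {k : ℕ} (σ : Equiv.Perm (Fin k)) (n : ℕ) :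
    (∀ i : Fin k, (i : ℕ) < n → ((σ i : Fin k) : ℕ) < n) ↔
      ∀ i : Fin k, n ≤ ((σ i : Fin k) : ℕ) ↔ n ≤ (i : ℕ) := by
  refine ⟨fun h i => ?_, fun h i hi => ?_⟩
  · simpa using not_congr (σ.apply_mem_iff_of_mapsTo (s := {i | (i : ℕ) < n}) h i)
  · simpa using mt (h i).1 (by simpa using hi)

theorem Fin.insert_image_swap_setOf_le {k n : ℕ} {q p : Fin k} (hq : (q : ℕ) + 1 = n)
    (hp : n ≤ (p : ℕ)) :
    insert p (Equiv.swap q p '' {i : Fin k | n ≤ (i : ℕ)}) = {i : Fin k | n - 1 ≤ (i : ℕ)} := by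
  ext i
  rw [Equiv.image_eq_preimage_symm, Equiv.symm_swap, Set.mem_insert_iff, Set.mem_preimage,
    Set.mem_ofPred_eq, Set.mem_ofPred_eq, Equiv.swap_apply_def]
  split_ifs <;> simp_all [Fin.ext_iff] <;> omega

abbrev Wreath (G : Type*) [Group G] (k : ℕ) : Type _ :=
  (Fin k → G) ⋊[permHom G k] Equiv.Perm (Fin k)

namespace Wreath

open SemidirectProduct

variable {G : Type*} [Group G] {k : ℕ}

@[simp]
theorem permHom_apply (σ : Equiv.Perm (Fin k)) (f : Fin k → G) (i : Fin k) :
    permHom G k σ f i = f (σ⁻¹ i) := rfl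

instance : MulAction (Wreath G k) (Fin k × G) where
  smul x a := (x.right a.1, x.left (x.right a.1) * a.2)
  one_smul a := Prod.ext rfl (one_mul a.2)
  mul_smul x y a := Prod.ext rfl (by
    change (x * y).left (x.right (y.right a.1)) * a.2 =
      x.left (x.right (y.right a.1)) * (y.left (y.right a.1) * a.2)
    simp [mul_left, mul_assoc])

theorem smul_def (x : Wreath G k) (a : Fin k × G) :
    x • a = (x.right a.1, x.left (x.right a.1) * a.2) := rfl

@[simp]
theorem inl_smul (f : Fin k → G) (a : Fin k × G) : (inl f : Wreath G k) • a = (a.1, f a.1 * a.2) :=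
  rfl

@[simp]
theorem inr_smul (σ : Equiv.Perm (Fin k)) (a : Fin k × G) :
    (inr σ : Wreath G k) • a = (σ a.1, a.2) :=
  Prod.ext rfl (one_mul a.2)

theorem mem_stabilizer_iff {x : Wreath G k} {p : Fin k} :
    x ∈ MulAction.stabilizer (Wreath G k) (p, (1 : G)) ↔ x.right p = p ∧ x.left p = 1 := by
  simp only [MulAction.mem_stabilizer_iff, smul_def, Prod.mk.injEq, mul_one]
  exact and_congr_right fun hp => by rw [hp]

/-- For `T` the last `m` of `n + m` letters this is `Γ_{n,m}`. -/
def blockSubgroup (T : Set (Fin k)) : Subgroup (Wreath G k) where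
  carrier := {x | (∀ i, x.right i ∈ T ↔ i ∈ T) ∧ ∀ i ∈ T, x.left i = 1}
  one_mem' := ⟨fun _ => Iff.rfl, fun _ _ => rfl⟩
  mul_mem' := by
    rintro x y ⟨hxT, hx⟩ ⟨hyT, hy⟩
    refine ⟨fun i => (hxT _).trans (hyT i), fun i hi => ?_⟩
    have : x.right⁻¹ i ∈ T := by rwa [← hxT, ← Equiv.Perm.mul_apply, mul_inv_cancel]
    rw [mul_left, Pi.mul_apply, permHom_apply, hx i hi, hy _ this, one_mul]
  inv_mem' := by
    rintro x ⟨hxT, hx⟩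
    refine ⟨fun i => ?_, fun i hi => ?_⟩
    · rw [inv_right, ← hxT, ← Equiv.Perm.mul_apply, mul_inv_cancel, Equiv.Perm.one_apply]
    · rw [inv_left, permHom_apply, inv_inv, Pi.inv_apply, hx _ ((hxT i).2 hi), inv_one]

theorem mem_blockSubgroup {T : Set (Fin k)} {x : Wreath G k} :
    x ∈ blockSubgroup T ↔ (∀ i, x.right i ∈ T ↔ i ∈ T) ∧ ∀ i ∈ T, x.left i = 1 := Iff.rfl

theorem exists_mem_blockSubgroup_smul_eq_iff {T : Set (Fin k)} {a b : Fin k × G} :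
    (∃ x ∈ (blockSubgroup T : Subgroup (Wreath G k)), x • a = b) ↔
      a.1 ∉ T ∧ b.1 ∉ T ∨ a.1 ∈ T ∧ b.1 ∈ T ∧ a.2 = b.2 := by
  obtain ⟨i, g⟩ := a
  obtain ⟨j, h⟩ := b
  constructor
  · rintro ⟨x, ⟨hxT, hx⟩, hxa⟩
    rw [smul_def, Prod.mk.injEq] at hxa
    obtain ⟨rfl, rfl⟩ := hxa
    by_cases hi : i ∈ T
    · exact Or.inr ⟨hi, (hxT i).2 hi, by rw [hx _ ((hxT i).2 hi), one_mul]⟩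
    · exact Or.inl ⟨hi, mt (hxT i).1 hi⟩
  · rintro (⟨hi, hj⟩ | ⟨hi, hj, rfl⟩)
    · refine ⟨⟨Pi.mulSingle j (h * g⁻¹), Equiv.swap i j⟩,
        ⟨Equiv.swap_apply_mem_iff (iff_of_false hi hj),
          fun l hl => Pi.mulSingle_eq_of_ne (ne_of_mem_of_not_mem hl hj) _⟩, ?_⟩
      simp [smul_def]
    · exact ⟨inr (Equiv.swap i j),
        ⟨Equiv.swap_apply_mem_iff (iff_of_true hi hj), fun _ _ => rfl⟩, by simp⟩

theorem mem_doubleCoset_stabilizer_blockSubgroup_iff {p : Fin k} {T : Set (Fin k)}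
    {x w : Wreath G k} :
    w ∈ DoubleCoset.doubleCoset x
        (MulAction.stabilizer (Wreath G k) (p, (1 : G)) : Set (Wreath G k))
        (blockSubgroup T : Subgroup (Wreath G k)) ↔
      (x⁻¹ • (p, (1 : G))).1 ∉ T ∧ (w⁻¹ • (p, (1 : G))).1 ∉ T ∨
        (x⁻¹ • (p, (1 : G))).1 ∈ T ∧ (w⁻¹ • (p, (1 : G))).1 ∈ T ∧
          (x⁻¹ • (p, (1 : G))).2 = (w⁻¹ • (p, (1 : G))).2 :=
  DoubleCoset.mem_doubleCoset_stabilizer_iff.trans exists_mem_blockSubgroup_smul_eq_iff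

theorem commute_inl_mulSingle {p : Fin k} (γ : G) {y : Wreath G k}
    (hy : y ∈ MulAction.stabilizer (Wreath G k) (p, (1 : G))) :
    Commute (inl (Pi.mulSingle p γ)) y := by
  rw [mem_stabilizer_iff] at hy
  obtain ⟨hp, hlp⟩ := hy
  refine SemidirectProduct.ext (funext fun i => ?_) (by simp [mul_right])
  simp only [mul_left, left_inl, right_inl, map_one, MulAut.one_apply, Pi.mul_apply,
    permHom_apply]
  have hinv : y.right⁻¹ p = p := by rw [Equiv.Perm.inv_eq_iff_eq, hp]
  rcases eq_or_ne i p with rfl | hi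
  · rw [hinv, hlp, one_mul, mul_one]
  · have hinv_ne : y.right⁻¹ i ≠ p := fun h =>
      hi (by rw [← Equiv.Perm.eq_inv_iff_eq.1 h.symm, hp])
    rw [Pi.mulSingle_eq_of_ne hi, Pi.mulSingle_eq_of_ne hinv_ne, one_mul, mul_one]

theorem map_conj_inr_blockSubgroup (σ : Equiv.Perm (Fin k)) (T : Set (Fin k)) :
    (blockSubgroup T : Subgroup (Wreath G k)).map (MulAut.conj (inr σ)).toMonoidHom =
      blockSubgroup (σ '' T) := by
  ext y
  rw [Subgroup.mem_map_equiv, MulAut.conj_symm_apply, mem_blockSubgroup, mem_blockSubgroup,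
    Set.forall_mem_image]
  refine and_congr ?_ (forall₂_congr fun i _ => ?_)
  · refine Equiv.forall_congr σ fun i => ?_
    simp [Set.mem_image_equiv, mul_right, inv_right]
  · simp [mul_left, inv_left, -map_inv]

theorem blockSubgroup_insert_inf_stabilizer (p : Fin k) (T : Set (Fin k)) :
    blockSubgroup (insert p T) ⊓ MulAction.stabilizer (Wreath G k) (p, (1 : G)) =
      blockSubgroup T ⊓ MulAction.stabilizer (Wreath G k) (p, (1 : G)) := by
  ext y
  rw [Subgroup.mem_inf, Subgroup.mem_inf, mem_stabilizer_iff]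
  refine and_congr_left fun ⟨hp, hlp⟩ => ?_
  simp only [mem_blockSubgroup, Set.forall_mem_insert, hlp, true_and]
  refine and_congr_left fun _ => forall_congr' fun i => ?_
  rcases eq_or_ne i p with rfl | hi
  · simp [hp]
  · have : y.right i ≠ p := fun h => hi (y.right.injective (h.trans hp.symm))
    simp [hi, this]

theorem inv_inl_mulSingle_smul (p : Fin k) (γ : G) :
    (inl (Pi.mulSingle p γ) : Wreath G k)⁻¹ • (p, (1 : G)) = (p, γ⁻¹) := by
  simp [← map_inv]

theorem inv_inr_smul (σ : Equiv.Perm (Fin k)) (a : Fin k × G) :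
    (inr σ : Wreath G k)⁻¹ • a = (σ⁻¹ a.1, a.2) := by
  rw [← map_inv, inr_smul]

theorem closure_setOf_eq_stabilizer (p : Fin k) :
    Subgroup.closure {x : Wreath G k | ∃ (γ : Fin k → G) (σ : Equiv.Perm (Fin k)),
      σ p = p ∧ γ p = 1 ∧ x = ⟨γ, σ⟩} = MulAction.stabilizer (Wreath G k) (p, (1 : G)) := by
  refine (congrArg Subgroup.closure ?_).trans (Subgroup.closure_eq _)
  ext x
  rw [Set.mem_ofPred_eq, SetLike.mem_coe, mem_stabilizer_iff]
  constructor
  · rintro ⟨γ, σ, hσ, hγ, rfl⟩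
    exact ⟨hσ, hγ⟩
  · rintro ⟨hσ, hγ⟩
    exact ⟨x.left, x.right, hσ, hγ, rfl⟩

theorem closure_setOf_eq_blockSubgroup (n : ℕ) :
    Subgroup.closure {x : Wreath G k | ∃ (γ : Fin k → G) (σ : Equiv.Perm (Fin k)),
      (∀ i : Fin k, (i : ℕ) < n → ((σ i : Fin k) : ℕ) < n) ∧
      (∀ i : Fin k, n ≤ (i : ℕ) → γ i = 1) ∧ x = ⟨γ, σ⟩} = blockSubgroup {i | n ≤ (i : ℕ)} := by
  refine (congrArg Subgroup.closure ?_).trans (Subgroup.closure_eq _)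
  ext x
  simp only [Set.mem_ofPred_eq, SetLike.mem_coe, mem_blockSubgroup, Fin.forall_perm_lt_imp_lt_iff]
  constructor
  · rintro ⟨γ, σ, hσ, hγ, rfl⟩
    exact ⟨hσ, hγ⟩
  · rintro ⟨hσ, hγ⟩
    exact ⟨x.left, x.right, hσ, hγ, rfl⟩

theorem closure_setOf_eq_blockSubgroup_inf_stabilizer {n : ℕ} {p : Fin k} (hp : n ≤ (p : ℕ)) :
    Subgroup.closure {x : Wreath G k | ∃ (γ : Fin k → G) (σ : Equiv.Perm (Fin k)),
      (∀ i : Fin k, (i : ℕ) < n → ((σ i : Fin k) : ℕ) < n) ∧ σ p = p ∧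
      (∀ i : Fin k, n ≤ (i : ℕ) → γ i = 1) ∧ x = ⟨γ, σ⟩} =
      blockSubgroup {i | n ≤ (i : ℕ)} ⊓ MulAction.stabilizer (Wreath G k) (p, (1 : G)) := by
  refine (congrArg Subgroup.closure ?_).trans (Subgroup.closure_eq _)
  ext x
  simp only [Set.mem_ofPred_eq, SetLike.mem_coe, Subgroup.mem_inf, mem_blockSubgroup,
    mem_stabilizer_iff, Fin.forall_perm_lt_imp_lt_iff]
  constructor
  · rintro ⟨γ, σ, hσ, hσp, hγ, rfl⟩
    exact ⟨⟨hσ, hγ⟩, hσp, hγ p hp⟩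
  · rintro ⟨⟨hσ, hγ⟩, hσp, -⟩
    exact ⟨x.left, x.right, hσ, hσp, hγ, rfl⟩

end Wreath

theorem statement_7_general (ℓ n m : ℕ) (hn : 1 ≤ n) (hm : 1 ≤ m)
    -- 0-indexed positions of the letters `n+m` and `n`
    (lastI nIdx : Fin (n + m)) (hlastI : (lastI : ℕ) = n + m - 1) (hnIdx : (nIdx : ℕ) = n - 1)
    -- `A = Γ_{n+m-1}`: elements fixing the letter `n+m`, with trivial root-of-unity
    -- component in slot `n+m`
    (A : Subgroup (WreathGamma ℓ (n + m)))
    (hA : A = Subgroup.closure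
      {x : WreathGamma ℓ (n + m) |
        ∃ (γ : Fin (n + m) → rootsOfUnity ℓ ℂ) (σ : Equiv.Perm (Fin (n + m))),
          σ lastI = lastI ∧ γ lastI = 1 ∧ x = ⟨γ, σ⟩})
    -- `B = Γ_{n,m} = Γ_n × 𝔖_m`
    (B : Subgroup (WreathGamma ℓ (n + m)))
    (hB : B = Subgroup.closure
      {x : WreathGamma ℓ (n + m) |
        ∃ (γ : Fin (n + m) → rootsOfUnity ℓ ℂ) (σ : Equiv.Perm (Fin (n + m))),
          (∀ i : Fin (n + m), (i : ℕ) < n → ((σ i : Fin (n + m)) : ℕ) < n) ∧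
          (∀ i : Fin (n + m), n ≤ (i : ℕ) → γ i = 1) ∧ x = ⟨γ, σ⟩})
    -- `Γ_{n,m-1} = Γ_n × 𝔖_{m-1}`, with `𝔖_{m-1}` acting on the letters `n+1, …, n+m-1`
    (Gnm1 : Subgroup (WreathGamma ℓ (n + m)))
    (hGnm1 : Gnm1 = Subgroup.closure
      {x : WreathGamma ℓ (n + m) |
        ∃ (γ : Fin (n + m) → rootsOfUnity ℓ ℂ) (σ : Equiv.Perm (Fin (n + m))),
          (∀ i : Fin (n + m), (i : ℕ) < n → ((σ i : Fin (n + m)) : ℕ) < n) ∧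
          σ lastI = lastI ∧
          (∀ i : Fin (n + m), n ≤ (i : ℕ) → γ i = 1) ∧ x = ⟨γ, σ⟩})
    -- `Γ_{n-1,m} = Γ_{n-1} × 𝔖_m`, with `𝔖_m` acting on the letters `n, …, n+m-1`
    (Gn1m : Subgroup (WreathGamma ℓ (n + m)))
    (hGn1m : Gn1m = Subgroup.closure
      {x : WreathGamma ℓ (n + m) |
        ∃ (γ : Fin (n + m) → rootsOfUnity ℓ ℂ) (σ : Equiv.Perm (Fin (n + m))),
          (∀ i : Fin (n + m), (i : ℕ) < n - 1 → ((σ i : Fin (n + m)) : ℕ) < n - 1) ∧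
          σ lastI = lastI ∧
          (∀ i : Fin (n + m), n - 1 ≤ (i : ℕ) → γ i = 1) ∧ x = ⟨γ, σ⟩})
    -- the elements `γ_{n+m}` (for `γ ∈ μ_ℓ`) and `s_{n,n+m}`
    (xg : rootsOfUnity ℓ ℂ → WreathGamma ℓ (n + m))
    (hxg : ∀ γ, xg γ = SemidirectProduct.inl (Pi.mulSingle lastI γ))
    (xs : WreathGamma ℓ (n + m))
    (hxs : xs = SemidirectProduct.inr (Equiv.swap nIdx lastI)) :
    -- (1) completeness of the set of double coset representatives
    (∀ w : WreathGamma ℓ (n + m),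
      (∃ γ : rootsOfUnity ℓ ℂ, w ∈ DoubleCoset.doubleCoset (xg γ) (A : Set (WreathGamma ℓ (n + m))) B) ∨
        w ∈ DoubleCoset.doubleCoset xs (A : Set (WreathGamma ℓ (n + m))) B) ∧
    -- (1') pairwise distinctness of the `ℓ+1` double cosets
    (∀ γ γ' : rootsOfUnity ℓ ℂ,
      DoubleCoset.doubleCoset (xg γ) (A : Set (WreathGamma ℓ (n + m))) B =
        DoubleCoset.doubleCoset (xg γ') (A : Set (WreathGamma ℓ (n + m))) B → γ = γ') ∧
    (∀ γ : rootsOfUnity ℓ ℂ,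
      DoubleCoset.doubleCoset (xg γ) (A : Set (WreathGamma ℓ (n + m))) B ≠
        DoubleCoset.doubleCoset xs (A : Set (WreathGamma ℓ (n + m))) B) ∧
    -- (2) `γ_{n+m}·Γ_{n,m}·γ_{n+m}⁻¹ ∩ Γ_{n+m-1} = Γ_{n,m-1}`
    (∀ γ : rootsOfUnity ℓ ℂ,
      Subgroup.map (MulAut.conj (xg γ)).toMonoidHom B ⊓ A = Gnm1) ∧
    -- (3) `s_{n,n+m}·Γ_{n,m}·s_{n,n+m}⁻¹ ∩ Γ_{n+m-1} = Γ_{n-1,m}`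
    (Subgroup.map (MulAut.conj xs).toMonoidHom B ⊓ A = Gn1m) := by
  have hlast : n ≤ (lastI : ℕ) := by omega
  rw [Wreath.closure_setOf_eq_stabilizer] at hA
  rw [Wreath.closure_setOf_eq_blockSubgroup] at hB
  rw [Wreath.closure_setOf_eq_blockSubgroup_inf_stabilizer hlast] at hGnm1
  rw [Wreath.closure_setOf_eq_blockSubgroup_inf_stabilizer
    (show n - 1 ≤ (lastI : ℕ) by omega)] at hGn1m
  subst hA hB hGnm1 hGn1m
  have hxg_smul (γ) : (xg γ)⁻¹ • (lastI, (1 : rootsOfUnity ℓ ℂ)) = (lastI, γ⁻¹) := by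
    rw [hxg, Wreath.inv_inl_mulSingle_smul]
  have hxs_smul : xs⁻¹ • (lastI, (1 : rootsOfUnity ℓ ℂ)) = (nIdx, 1) := by
    rw [hxs, Wreath.inv_inr_smul, Equiv.swap_inv, Equiv.swap_apply_right]
  have hnIdx_lt : ¬ n ≤ (nIdx : ℕ) := by omega
  refine ⟨fun w => ?_, fun γ γ' h => ?_, fun γ h => ?_, fun γ => ?_, ?_⟩
  · rcases hw : w⁻¹ • (lastI, (1 : rootsOfUnity ℓ ℂ)) with ⟨j, g⟩
    by_cases hj : n ≤ (j : ℕ)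
    · refine Or.inl ⟨g⁻¹, ?_⟩
      rw [Wreath.mem_doubleCoset_stabilizer_blockSubgroup_iff, hxg_smul, hw]
      simp [hj, hlast]
    · refine Or.inr ?_
      rw [Wreath.mem_doubleCoset_stabilizer_blockSubgroup_iff, hxs_smul, hw]
      simp [hj, hnIdx_lt]
  · have hmem := h ▸ DoubleCoset.mem_doubleCoset_self _ _ (xg γ)
    rw [Wreath.mem_doubleCoset_stabilizer_blockSubgroup_iff, hxg_smul, hxg_smul] at hmem
    simpa [hlast, eq_comm] using hmem
  · have hmem := h ▸ DoubleCoset.mem_doubleCoset_self _ _ (xg γ)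
    rw [Wreath.mem_doubleCoset_stabilizer_blockSubgroup_iff, hxg_smul, hxs_smul] at hmem
    simp [hlast, hnIdx_lt] at hmem
  · rw [hxg]
    exact Subgroup.map_conj_inf_eq_of_commute fun y hy => Wreath.commute_inl_mulSingle γ hy
  · rw [hxs, Wreath.map_conj_inr_blockSubgroup, ← Wreath.blockSubgroup_insert_inf_stabilizer,
      Fin.insert_image_swap_setOf_le (show (nIdx : ℕ) + 1 = n by omega) hlast]

theorem statement_7 (ℓ n m : ℕ) (hℓ : 1 ≤ ℓ) (hn : 1 ≤ n) (hm : 1 ≤ m)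
    -- 0-indexed positions of the letters `n+m` and `n`
    (lastI nIdx : Fin (n + m)) (hlastI : (lastI : ℕ) = n + m - 1) (hnIdx : (nIdx : ℕ) = n - 1)
    -- `A = Γ_{n+m-1}`: elements fixing the letter `n+m`, with trivial root-of-unity
    -- component in slot `n+m`
    (A : Subgroup (WreathGamma ℓ (n + m)))
    (hA : A = Subgroup.closure
      {x : WreathGamma ℓ (n + m) |
        ∃ (γ : Fin (n + m) → rootsOfUnity ℓ ℂ) (σ : Equiv.Perm (Fin (n + m))),
          σ lastI = lastI ∧ γ lastI = 1 ∧ x = ⟨γ, σ⟩})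
    -- `B = Γ_{n,m} = Γ_n × 𝔖_m`
    (B : Subgroup (WreathGamma ℓ (n + m)))
    (hB : B = Subgroup.closure
      {x : WreathGamma ℓ (n + m) |
        ∃ (γ : Fin (n + m) → rootsOfUnity ℓ ℂ) (σ : Equiv.Perm (Fin (n + m))),
          (∀ i : Fin (n + m), (i : ℕ) < n → ((σ i : Fin (n + m)) : ℕ) < n) ∧
          (∀ i : Fin (n + m), n ≤ (i : ℕ) → γ i = 1) ∧ x = ⟨γ, σ⟩})
    -- `Γ_{n,m-1} = Γ_n × 𝔖_{m-1}`, with `𝔖_{m-1}` acting on the letters `n+1, …, n+m-1`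
    (Gnm1 : Subgroup (WreathGamma ℓ (n + m)))
    (hGnm1 : Gnm1 = Subgroup.closure
      {x : WreathGamma ℓ (n + m) |
        ∃ (γ : Fin (n + m) → rootsOfUnity ℓ ℂ) (σ : Equiv.Perm (Fin (n + m))),
          (∀ i : Fin (n + m), (i : ℕ) < n → ((σ i : Fin (n + m)) : ℕ) < n) ∧
          σ lastI = lastI ∧
          (∀ i : Fin (n + m), n ≤ (i : ℕ) → γ i = 1) ∧ x = ⟨γ, σ⟩})
    -- `Γ_{n-1,m} = Γ_{n-1} × 𝔖_m`, with `𝔖_m` acting on the letters `n, …, n+m-1`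
    (Gn1m : Subgroup (WreathGamma ℓ (n + m)))
    (hGn1m : Gn1m = Subgroup.closure
      {x : WreathGamma ℓ (n + m) |
        ∃ (γ : Fin (n + m) → rootsOfUnity ℓ ℂ) (σ : Equiv.Perm (Fin (n + m))),
          (∀ i : Fin (n + m), (i : ℕ) < n - 1 → ((σ i : Fin (n + m)) : ℕ) < n - 1) ∧
          σ lastI = lastI ∧
          (∀ i : Fin (n + m), n - 1 ≤ (i : ℕ) → γ i = 1) ∧ x = ⟨γ, σ⟩})
    -- the elements `γ_{n+m}` (for `γ ∈ μ_ℓ`) and `s_{n,n+m}`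
    (xg : rootsOfUnity ℓ ℂ → WreathGamma ℓ (n + m))
    (hxg : ∀ γ, xg γ = SemidirectProduct.inl (Pi.mulSingle lastI γ))
    (xs : WreathGamma ℓ (n + m))
    (hxs : xs = SemidirectProduct.inr (Equiv.swap nIdx lastI)) :
    -- (1) completeness of the set of double coset representatives
    (∀ w : WreathGamma ℓ (n + m),
      (∃ γ : rootsOfUnity ℓ ℂ, w ∈ DoubleCoset.doubleCoset (xg γ) (A : Set (WreathGamma ℓ (n + m))) B) ∨
        w ∈ DoubleCoset.doubleCoset xs (A : Set (WreathGamma ℓ (n + m))) B) ∧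
    -- (1') pairwise distinctness of the `ℓ+1` double cosets
    (∀ γ γ' : rootsOfUnity ℓ ℂ,
      DoubleCoset.doubleCoset (xg γ) (A : Set (WreathGamma ℓ (n + m))) B =
        DoubleCoset.doubleCoset (xg γ') (A : Set (WreathGamma ℓ (n + m))) B → γ = γ') ∧
    (∀ γ : rootsOfUnity ℓ ℂ,
      DoubleCoset.doubleCoset (xg γ) (A : Set (WreathGamma ℓ (n + m))) B ≠
        DoubleCoset.doubleCoset xs (A : Set (WreathGamma ℓ (n + m))) B) ∧
    -- (2) `γ_{n+m}·Γ_{n,m}·γ_{n+m}⁻¹ ∩ Γ_{n+m-1} = Γ_{n,m-1}`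
    (∀ γ : rootsOfUnity ℓ ℂ,
      Subgroup.map (MulAut.conj (xg γ)).toMonoidHom B ⊓ A = Gnm1) ∧
    -- (3) `s_{n,n+m}·Γ_{n,m}·s_{n,n+m}⁻¹ ∩ Γ_{n+m-1} = Γ_{n-1,m}`
    (Subgroup.map (MulAut.conj xs).toMonoidHom B ⊓ A = Gn1m) :=
  statement_7_general ℓ n m hn hm lastI nIdx hlastI hnIdx A hA B hB Gnm1 hGnm1 Gn1m hGn1m xg hxg xs
    hxs
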